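/- Let A be an m×n real matrix with rank ρ and k ≤ ρ. For any n×k real matrix S and any integer p ≥ 0, σ_k((A Aᵀ)^p A S) ≥ σ_k(A)^{2p+1} · σ_k(V_kᵀ S). -/

import Mathlib

/-!
Write `A = U Σ Vᵀ` with orthonormal columns in `U` and `V`. Then `(A Aᵀ)^p A = U Σ^(2p+1) Vᵀ`,
so for every `x`, with `y = Vᵀ S x`,
`‖(A Aᵀ)^p A S x‖² = ∑ᵢ σᵢ^(2(2p+1)) yᵢ² ≥ σ_k^(2(2p+1)) ∑_{i<k} yᵢ² = σ_k^(2(2p+1)) ‖V_kᵀ S x‖²`.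
This is a Loewner inequality between the two `k × k` Gram matrices, and the smallest eigenvalue
is monotone for that order: evaluate both quadratic forms at a unit eigenvector of the larger
matrix's smallest eigenvalue. Taking square roots gives the bound on `σ_k`.
-/

open Matrix MeasureTheory ProbabilityTheory
open scoped Matrix.Norms.L2Operator

noncomputable section

theorem Matrix.isHermitian_transpose_mul_self {m n : Type*} [Fintype m] (M : Matrix m n ℝ) :
    (Mᵀ * M).IsHermitian := by
  rw [Matrix.IsHermitian, Matrix.conjTranspose_eq_transpose_of_trivial, Matrix.transpose_mul,
    Matrix.transpose_transpose]

/-- Euclidean (ℓ²) norm of a vector. -/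
def vnorm {m : ℕ} (x : Fin m → ℝ) : ℝ := ‖(WithLp.equiv 2 (Fin m → ℝ)).symm x‖

/-- `sval M i` is the `i`-th largest singular value of `M` (0-indexed), i.e. the square root of
the `i`-th largest eigenvalue of `MᵀM`. -/
def sval {m n : ℕ} (M : Matrix (Fin m) (Fin n) ℝ) (i : Fin n) : ℝ :=
  Real.sqrt ((Matrix.isHermitian_transpose_mul_self M).eigenvalues
    (Tuple.sort (Matrix.isHermitian_transpose_mul_self M).eigenvalues i.rev))

/-- `P` is the Moore–Penrose pseudoinverse of `M` (the four Penrose conditions). -/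
def IsMoorePenrose {m n : ℕ} (M : Matrix (Fin m) (Fin n) ℝ)
    (P : Matrix (Fin n) (Fin m) ℝ) : Prop :=
  M * P * M = M ∧ P * M * P = P ∧ (M * P)ᵀ = M * P ∧ (P * M)ᵀ = P * M

/-- Column space of a matrix: the span of its columns. -/
def colSpace {m n : ℕ} (M : Matrix (Fin m) (Fin n) ℝ) : Submodule ℝ (Fin m → ℝ) :=
  Submodule.span ℝ (Set.range Mᵀ)

open scoped MatrixOrder in
theorem Matrix.IsHermitian.mul_dotProduct_self_le {n : Type*} [Fintype n] [DecidableEq n]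
    {M : Matrix n n ℝ} (hM : M.IsHermitian) {c : ℝ} (hc : ∀ i, c ≤ hM.eigenvalues i)
    (x : n → ℝ) : c * (x ⬝ᵥ x) ≤ x ⬝ᵥ (M *ᵥ x) := by
  have hle : algebraMap ℝ _ c ≤ M := by
    rw [algebraMap_le_iff_le_spectrum (ha := hM.isSelfAdjoint),
      hM.spectrum_real_eq_range_eigenvalues]
    rintro _ ⟨i, rfl⟩
    exact hc i
  have := (Matrix.le_iff.mp hle).dotProduct_mulVec_nonneg x
  rw [star_trivial, sub_mulVec, dotProduct_sub, Algebra.algebraMap_eq_smul_one, smul_mulVec,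
    one_mulVec, dotProduct_smul, smul_eq_mul, sub_nonneg] at this
  exact this

theorem Matrix.IsHermitian.exists_dotProduct_self_eq_one {n : Type*} [Fintype n] [DecidableEq n]
    {M : Matrix n n ℝ} (hM : M.IsHermitian) (i : n) :
    ∃ x : n → ℝ, x ⬝ᵥ x = 1 ∧ x ⬝ᵥ (M *ᵥ x) = hM.eigenvalues i := by
  have hx : ⇑(hM.eigenvectorBasis i) ⬝ᵥ ⇑(hM.eigenvectorBasis i) = 1 := by
    have h := hM.eigenvectorBasis.inner_eq_one i
    rwa [EuclideanSpace.inner_eq_star_dotProduct, star_trivial, dotProduct_comm] at h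
  refine ⟨hM.eigenvectorBasis i, hx, ?_⟩
  rw [hM.mulVec_eigenvectorBasis, dotProduct_smul, hx, smul_eq_mul, mul_one]

theorem Tuple.apply_sort_zero_le {α : Type*} [LinearOrder α] {N : ℕ} (hN : 0 < N)
    (f : Fin N → α) (i : Fin N) : f (Tuple.sort f ⟨0, hN⟩) ≤ f i := by
  simpa using Tuple.monotone_sort f (Fin.mk_le_of_le_val (Nat.zero_le ((Tuple.sort f)⁻¹ i)))

theorem Matrix.IsHermitian.mul_eigenvalues_sort_zero_le {k : ℕ} (hk : 0 < k)
    {B C : Matrix (Fin k) (Fin k) ℝ} (hB : B.IsHermitian) (hC : C.IsHermitian) {c : ℝ}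
    (hc : 0 ≤ c) (h : ∀ x, c * (x ⬝ᵥ (C *ᵥ x)) ≤ x ⬝ᵥ (B *ᵥ x)) (i : Fin k) :
    c * hC.eigenvalues (Tuple.sort hC.eigenvalues ⟨0, hk⟩) ≤ hB.eigenvalues i := by
  obtain ⟨u, hu, huB⟩ := hB.exists_dotProduct_self_eq_one i
  have huC := hC.mul_dotProduct_self_le (Tuple.apply_sort_zero_le hk hC.eigenvalues) u
  rw [hu, mul_one] at huC
  calc c * hC.eigenvalues (Tuple.sort hC.eigenvalues ⟨0, hk⟩)
      ≤ c * (u ⬝ᵥ (C *ᵥ u)) := mul_le_mul_of_nonneg_left huC hc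
    _ ≤ u ⬝ᵥ (B *ᵥ u) := h u
    _ = hB.eigenvalues i := huB

theorem Matrix.dotProduct_transpose_mul_self_mulVec {R : Type*} [CommSemiring R]
    {m n : Type*} [Fintype m] [Fintype n] (M : Matrix m n R) (x : n → R) :
    x ⬝ᵥ ((Mᵀ * M) *ᵥ x) = (M *ᵥ x) ⬝ᵥ (M *ᵥ x) := by
  rw [← mulVec_mulVec, dotProduct_mulVec, vecMul_transpose]

-- `Fin.rev` sends index `k - 1` to the first, i.e. smallest, sorted eigenvalue of the Gram matrix.
theorem mul_sval_last_le_sval_last {a b k : ℕ} (hk : k - 1 < k) (M : Matrix (Fin a) (Fin k) ℝ)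
    (N : Matrix (Fin b) (Fin k) ℝ) {c : ℝ} (hc : 0 ≤ c)
    (h : ∀ x, c ^ 2 * ((N *ᵥ x) ⬝ᵥ (N *ᵥ x)) ≤ (M *ᵥ x) ⬝ᵥ (M *ᵥ x)) :
    c * sval N ⟨k - 1, hk⟩ ≤ sval M ⟨k - 1, hk⟩ := by
  have hk0 : 0 < k := by omega
  have hrev : (⟨k - 1, hk⟩ : Fin k).rev = ⟨0, hk0⟩ := by ext; simp only [Fin.val_rev]; omega
  rw [sval, sval, hrev, ← Real.sqrt_sq hc, ← Real.sqrt_mul (sq_nonneg c)]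
  refine Real.sqrt_le_sqrt
    (Matrix.IsHermitian.mul_eigenvalues_sort_zero_le hk0 _ _ (sq_nonneg c) (fun x => ?_) _)
  simpa only [dotProduct_transpose_mul_self_mulVec] using h x

section Orthonormal

variable {R : Type*} [CommRing R] {m n r : Type*} [Fintype m] [Fintype n] [Fintype r]
  [DecidableEq r] {U : Matrix m r R} {V : Matrix n r R}

theorem Matrix.pow_mul_transpose_mul_eq [DecidableEq m] (hU : Uᵀ * U = 1) (hV : Vᵀ * V = 1)
    (D : Matrix r r R) (p : ℕ) :
    (U * D * Vᵀ * (U * D * Vᵀ)ᵀ) ^ p * (U * D * Vᵀ) = U * ((D * Dᵀ) ^ p * D) * Vᵀ := by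
  induction p with
  | zero => simp only [pow_zero, Matrix.one_mul]
  | succ p ih =>
    rw [pow_succ', Matrix.mul_assoc, ih]
    simp only [transpose_mul, transpose_transpose, Matrix.mul_assoc]
    rw [← Matrix.mul_assoc Vᵀ V, hV, Matrix.one_mul, ← Matrix.mul_assoc Uᵀ U, hU, Matrix.one_mul]
    simp only [pow_succ', Matrix.mul_assoc]

theorem Matrix.mulVec_dotProduct_mulVec_self (hU : Uᵀ * U = 1) (w : r → R) :
    (U *ᵥ w) ⬝ᵥ (U *ᵥ w) = w ⬝ᵥ w := by
  rw [dotProduct_mulVec, ← vecMul_transpose, vecMul_vecMul, hU, vecMul_one]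

end Orthonormal

theorem Matrix.diagonal_mul_transpose_pow_mul {R r : Type*} [CommSemiring R] [Fintype r]
    [DecidableEq r] (d : r → R) (p : ℕ) :
    (diagonal d * (diagonal d)ᵀ) ^ p * diagonal d = diagonal fun i => d i ^ (2 * p + 1) := by
  rw [diagonal_transpose, diagonal_mul_diagonal, diagonal_pow, diagonal_mul_diagonal]
  congr 1
  funext i
  rw [Pi.pow_apply]
  ring

theorem mul_sum_sq_castLE_le_sum_mul_sq {k ρ : ℕ} (hk : k ≤ ρ) {w : Fin ρ → ℝ} {c : ℝ}
    (hw : ∀ i, 0 ≤ w i) (hc : ∀ j : Fin k, c ≤ w (Fin.castLE hk j)) (y : Fin ρ → ℝ) :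
    c * ∑ j : Fin k, y (Fin.castLE hk j) ^ 2 ≤ ∑ i, w i * y i ^ 2 :=
  calc c * ∑ j : Fin k, y (Fin.castLE hk j) ^ 2
      ≤ ∑ j : Fin k, w (Fin.castLE hk j) * y (Fin.castLE hk j) ^ 2 := by
        rw [Finset.mul_sum]
        exact Finset.sum_le_sum fun j _ => mul_le_mul_of_nonneg_right (hc j) (sq_nonneg _)
    _ = ∑ i ∈ Finset.univ.map (Fin.castLEEmb hk), w i * y i ^ 2 := by
        rw [Finset.sum_map]; rfl
    _ ≤ ∑ i, w i * y i ^ 2 := Finset.sum_le_sum_of_subset_of_nonneg (Finset.subset_univ _)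
        fun i _ _ => mul_nonneg (hw i) (sq_nonneg _)

/-- `σ_k((A Aᵀ)^p A S) ≥ σ_k(A)^{2p+1} σ_k(V_kᵀ S)`. -/
theorem stmt_5 (m n ρ k : ℕ) (hk0 : 0 < k) (hkρ : k ≤ ρ)
    (A : Matrix (Fin m) (Fin n) ℝ)
    (U : Matrix (Fin m) (Fin ρ) ℝ) (V : Matrix (Fin n) (Fin ρ) ℝ) (σ : Fin ρ → ℝ)
    (hU : Uᵀ * U = 1) (hV : Vᵀ * V = 1)
    (hσpos : ∀ i, 0 < σ i) (hσmono : ∀ i j : Fin ρ, i ≤ j → σ j ≤ σ i)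
    (hA : A = U * Matrix.diagonal σ * Vᵀ)
    (S : Matrix (Fin n) (Fin k) ℝ) (p : ℕ) :
    σ ⟨k - 1, by omega⟩ ^ (2 * p + 1) *
        sval ((V.submatrix id (Fin.castLE hkρ))ᵀ * S) ⟨k - 1, by omega⟩ ≤
      sval ((A * Aᵀ) ^ p * A * S) ⟨k - 1, by omega⟩ := by
  set t : Fin ρ := ⟨k - 1, by omega⟩
  have hpow : (A * Aᵀ) ^ p * A * S = U * diagonal (fun i => σ i ^ (2 * p + 1)) * (Vᵀ * S) := by
    rw [hA, pow_mul_transpose_mul_eq hU hV, diagonal_mul_transpose_pow_mul, Matrix.mul_assoc]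
  have hsub : (V.submatrix id (Fin.castLE hkρ))ᵀ * S = (Vᵀ * S).submatrix (Fin.castLE hkρ) id := by
    rw [transpose_submatrix, submatrix_mul _ _ _ _ _ Function.bijective_id, submatrix_id_id]
  refine mul_sval_last_le_sval_last _ _ _ (pow_nonneg (hσpos t).le _) fun x => ?_
  rw [hpow, hsub, ← mulVec_mulVec, ← mulVec_mulVec, mulVec_dotProduct_mulVec_self hU]
  have hy : (Vᵀ * S).submatrix (Fin.castLE hkρ) id *ᵥ x = ((Vᵀ * S) *ᵥ x) ∘ Fin.castLE hkρ := rfl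
  rw [hy]
  simp only [dotProduct, mulVec_diagonal, Function.comp_apply, ← sq, mul_pow]
  refine mul_sum_sq_castLE_le_sum_mul_sq hkρ (fun i => sq_nonneg _) (fun j => ?_) _
  have hσt : σ t ≤ σ (Fin.castLE hkρ j) :=
    hσmono _ _ (Fin.le_iff_val_le_val.mpr (by simp only [Fin.val_castLE, t]; omega))
  have hσt0 := (hσpos t).le
  gcongr

end
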